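/- Let C be an invertible n×n matrix over a field K. Then the following are equivalent: (i) there exist a permutation matrix P and an upper triangular matrix U with C = P · U (equivalently, C admits a Bruhat decomposition C = U₁ P U₂ with U₁ the identity matrix); (ii) the map p : {1,…,n} → {1,…,n} defined by p(i) = min{ j : C_{ij} ≠ 0 } is a bijection. Moreover, in this case the row-permutation associated to P is exactly the map p, i.e. the unique nonzero entry of the i-th row of P lies in column p(i). -/
import Mathlib


/-- An `n × n` matrix is upper triangular if all entries below the diagonal vanish. -/
def IsUpperTriangular {n : ℕ} {K : Type*} [Field K]
    (U : Matrix (Fin n) (Fin n) K) : Prop :=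
  ∀ i j : Fin n, j < i → U i j = 0

/-- The permutation matrix associated to a permutation `σ` of `{1,…,n}`:
its `(i,j)` entry is `1` iff `σ i = j`.  In particular, the row-permutation
associated to `permMatrix K σ` is `σ` itself. -/
def permMatrix {n : ℕ} (K : Type*) [Field K] (σ : Equiv.Perm (Fin n)) :
    Matrix (Fin n) (Fin n) K :=
  Matrix.of fun i j => if σ i = j then 1 else 0

lemma permMatrix_mul_apply {n : ℕ} {K : Type*} [Field K] (σ : Equiv.Perm (Fin n))
    (U : Matrix (Fin n) (Fin n) K) (i j : Fin n) :
    (permMatrix K σ * U) i j = U (σ i) j := by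
  simp [permMatrix, Matrix.mul_apply]

/-- Let `C` be an invertible matrix over a field and `p i = min { j | C i j ≠ 0 }`
(well defined since every row of an invertible matrix is nonzero; here `p` is
characterised by being the least element of that set).  Then `C` admits a Bruhat
decomposition `C = P U` with trivial first upper triangular factor if and only if
`p` is a bijection; moreover, the row-permutation of `P` in any such decomposition
is exactly `p`. -/
theorem bruhat_PU_iff_min_bijective {n : ℕ} {K : Type*} [Field K]
    (C : Matrix (Fin n) (Fin n) K) (hC : IsUnit C)
    (p : Fin n → Fin n)
    (hp : ∀ i : Fin n, IsLeast {j : Fin n | C i j ≠ 0} (p i)) :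
    ((∃ (σ : Equiv.Perm (Fin n)) (U : Matrix (Fin n) (Fin n) K),
        IsUpperTriangular U ∧ C = permMatrix K σ * U) ↔ Function.Bijective p) ∧
    (∀ (σ : Equiv.Perm (Fin n)) (U : Matrix (Fin n) (Fin n) K),
        IsUpperTriangular U → C = permMatrix K σ * U → ∀ i : Fin n, σ i = p i) := by
  have key : ∀ (σ : Equiv.Perm (Fin n)) (U : Matrix (Fin n) (Fin n) K),
      IsUpperTriangular U → C = permMatrix K σ * U → ∀ i : Fin n, σ i = p i := by
    intro σ U hU hdec i
    have hentry : ∀ i j : Fin n, C i j = U (σ i) j := by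
      intro i j; rw [hdec, permMatrix_mul_apply]
    -- U = C.submatrix σ.symm id
    have hUeq : U = C.submatrix σ.symm id := by
      ext a b
      simp [Matrix.submatrix_apply, hentry (σ.symm a) b]
    have hdetC : C.det ≠ 0 := by
      exact (Matrix.isUnit_iff_isUnit_det C).mp hC |>.ne_zero
    have hdetU : U.det ≠ 0 := by
      rw [hUeq]
      have := Matrix.det_permute σ.symm C
      simp only [Matrix.submatrix] at this ⊢
      rw [show (Matrix.of fun i j => C (σ.symm i) (id j)) = Matrix.of fun i => C (σ.symm i) from rfl] at *
      rw [this]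
      simp [hdetC]
      rcases Int.units_eq_one_or σ.sign with h | h <;> simp [h]
    have hbt : U.BlockTriangular id := by
      intro a b h; exact hU a b h
    have hprod : ∏ k, U k k ≠ 0 := by
      rw [← Matrix.det_of_upperTriangular hbt]; exact hdetU
    have hdiag : U (σ i) (σ i) ≠ 0 :=
      Finset.prod_ne_zero_iff.mp hprod (σ i) (Finset.mem_univ _)
    have hleast : IsLeast {j : Fin n | C i j ≠ 0} (σ i) := by
      constructor
      · show C i (σ i) ≠ 0
        rw [hentry]; exact hdiag
      · intro j hj
        by_contra hlt
        push_neg at hlt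
        exact hj ((hentry i j).trans (hU (σ i) j hlt))
    exact hleast.unique (hp i)
  refine ⟨⟨?_, ?_⟩, key⟩
  · rintro ⟨σ, U, hU, hdec⟩
    have : (σ : Fin n → Fin n) = p := funext (key σ U hU hdec)
    rw [← this]; exact σ.bijective
  · intro hb
    set σ := Equiv.ofBijective p hb with hσ
    refine ⟨σ, Matrix.of fun i j => C (σ.symm i) j, ?_, ?_⟩
    · intro i j hji
      show C (σ.symm i) j = 0
      by_contra h
      have hle : p (σ.symm i) ≤ j := (hp (σ.symm i)).2 h
      have : p (σ.symm i) = i := σ.apply_symm_apply i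
      rw [this] at hle
      exact absurd hji (not_lt.mpr hle)
    · ext i j
      rw [permMatrix_mul_apply]
      simp
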